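/- (Negative definiteness of the multiplier response matrix) Let D ⊆ ℝᴹ be open, let F : ℝⁿ → ℝ and c : ℝⁿ → ℝᴹ be twice continuously differentiable, let v* : D → ℝⁿ and Λ : D → ℝᴹ be continuously differentiable with c(v*(x)) = x and ∇F(v*(x)) = Σₘ Λₘ(x)·∇cᵐ(v*(x)) for all x ∈ D. Fix x ∈ D and suppose the n×n matrix Hess F(v*(x)) − Σₘ Λₘ(x)·Hess cᵐ(v*(x)) is negative definite. Then the M×M matrix J with entries Jᵢⱼ = ∂Λᵢ/∂xʲ(x) is negative definite: ρᵀJρ < 0 for every nonzero ρ ∈ ℝᴹ. -/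

import Mathlib

/-!
Put `w = Dv*(x) ρ`. Differentiating `c (v* y) = y` gives `Dc(v* x) w = ρ`, so `w ≠ 0`.
Differentiating the first-order condition in the direction `ρ` gives `H w = ∑ m, (DΛₘ ρ) • Dcᵐ`,
where `H` is the Hessian of the Lagrangian at `v* x`; evaluating at `w` gives
`ρᵀ J ρ = H w w < 0`.
-/

open Filter Topology ContinuousLinearMap

section Coordinates

variable {𝕜 ι : Type*} [NontriviallyNormedField 𝕜] [Fintype ι] [DecidableEq ι]

theorem ContinuousLinearMap.apply_eq_sum_apply_single_mul (ℓ : (ι → 𝕜) →L[𝕜] 𝕜) (w : ι → 𝕜) :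
    ℓ w = ∑ k, ℓ (Pi.single k 1) * w k := by
  conv_lhs => rw [pi_eq_sum_univ' w]
  simp [map_sum, mul_comm]

theorem ContinuousLinearMap.apply_apply_eq_sum_sum (B : (ι → 𝕜) →L[𝕜] (ι → 𝕜) →L[𝕜] 𝕜)
    (w : ι → 𝕜) :
    B w w = ∑ s, ∑ k, w s * B (Pi.single s 1) (Pi.single k 1) * w k := by
  have hB := (B.flip w).apply_eq_sum_apply_single_mul w
  simp only [flip_apply] at hB
  rw [hB]
  refine Finset.sum_congr rfl fun s _ => ?_
  rw [(B (Pi.single s 1)).apply_eq_sum_apply_single_mul, Finset.sum_mul]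
  exact Finset.sum_congr rfl fun k _ => by ring

end Coordinates

section Lagrangian

variable {𝕜 ι E V G : Type*} [NontriviallyNormedField 𝕜] [Fintype ι]
  [NormedAddCommGroup E] [NormedSpace 𝕜 E] [NormedAddCommGroup V] [NormedSpace 𝕜 V]
  [NormedAddCommGroup G] [NormedSpace 𝕜 G]

theorem fderiv_fderiv_apply {f : V → G} {p : V} (hf : DifferentiableAt 𝕜 (fderiv 𝕜 f) p)
    (u h : V) : fderiv 𝕜 (fun v => fderiv 𝕜 f v u) p h = fderiv 𝕜 (fderiv 𝕜 f) p h u := by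
  have hd : HasFDerivAt (fun v => fderiv 𝕜 f v u)
      ((apply 𝕜 G u).comp (fderiv 𝕜 (fderiv 𝕜 f) p)) p :=
    (apply 𝕜 G u).hasFDerivAt.comp p hf.hasFDerivAt
  rw [hd.fderiv]
  rfl

theorem fderiv_comp_fderiv_eq_id {c : V → E} {v : E → V} {x : E}
    (hc : DifferentiableAt 𝕜 c (v x)) (hv : DifferentiableAt 𝕜 v x)
    (hcv : ∀ᶠ y in 𝓝 x, c (v y) = y) :
    (fderiv 𝕜 c (v x)).comp (fderiv 𝕜 v x) = ContinuousLinearMap.id 𝕜 E :=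
  (hc.hasFDerivAt.comp x hv.hasFDerivAt).unique ((hasFDerivAt_id x).congr_of_eventuallyEq hcv)

noncomputable def lagrangianHessian (F : V → 𝕜) (g : ι → V → 𝕜) (μ : ι → 𝕜) (p : V) :
    V →L[𝕜] V →L[𝕜] 𝕜 :=
  fderiv 𝕜 (fderiv 𝕜 F) p - ∑ m, μ m • fderiv 𝕜 (fderiv 𝕜 (g m)) p

theorem lagrangianHessian_apply_apply {F : V → 𝕜} {g : ι → V → 𝕜} {μ : ι → 𝕜} {p : V}
    (hF : DifferentiableAt 𝕜 (fderiv 𝕜 F) p) (hg : ∀ m, DifferentiableAt 𝕜 (fderiv 𝕜 (g m)) p)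
    (u u' : V) :
    lagrangianHessian F g μ p u u' = fderiv 𝕜 (fun v => fderiv 𝕜 F v u') p u
      - ∑ m, μ m * fderiv 𝕜 (fun v => fderiv 𝕜 (g m) v u') p u := by
  simp [lagrangianHessian, fderiv_fderiv_apply hF, fderiv_fderiv_apply (hg _)]

theorem lagrangianHessian_fderiv_apply {F : V → 𝕜} {g : ι → V → 𝕜} {v : E → V} {Λ : E → ι → 𝕜}
    {x : E} (hF : DifferentiableAt 𝕜 (fderiv 𝕜 F) (v x))
    (hg : ∀ m, DifferentiableAt 𝕜 (fderiv 𝕜 (g m)) (v x)) (hv : DifferentiableAt 𝕜 v x)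
    (hΛ : ∀ m, DifferentiableAt 𝕜 (fun y => Λ y m) x)
    (hFOC : ∀ᶠ y in 𝓝 x, fderiv 𝕜 F (v y) = ∑ m, Λ y m • fderiv 𝕜 (g m) (v y)) (ρ : E) :
    lagrangianHessian F g (Λ x) (v x) (fderiv 𝕜 v x ρ)
      = ∑ m, fderiv 𝕜 (fun y => Λ y m) x ρ • fderiv 𝕜 (g m) (v x) := by
  have hlhs := hF.hasFDerivAt.comp x hv.hasFDerivAt
  have hrhs := HasFDerivAt.fun_sum (u := Finset.univ) fun m _ =>
    (hΛ m).hasFDerivAt.smul ((hg m).hasFDerivAt.comp x hv.hasFDerivAt)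
  have h := congr($(hlhs.unique (hrhs.congr_of_eventuallyEq hFOC)) ρ)
  simp only [comp_apply, sum_apply, add_apply, smul_apply, smulRight_apply,
    Finset.sum_add_distrib] at h
  simp [lagrangianHessian, h]

end Lagrangian

/-- Negative definiteness of the multiplier response matrix: in the setting
`max F(v)` s.t. `c(v) = x`, fix `x ∈ D` and suppose the Hessian of the Lagrangian
`Hess F(v*(x)) - ∑ m Λ_m(x) Hess cᵐ(v*(x))` is negative definite.  Then the matrix
`J i j = ∂Λᵢ/∂xʲ(x)` is negative definite: `ρᵀ J ρ < 0` for all nonzero `ρ`. -/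
theorem stmt_9 (n M : ℕ) (D : Set (Fin M → ℝ)) (hD : IsOpen D)
    (F : (Fin n → ℝ) → ℝ) (hF : ContDiff ℝ 2 F)
    (c : (Fin n → ℝ) → (Fin M → ℝ)) (hc : ContDiff ℝ 2 c)
    (vstar : (Fin M → ℝ) → (Fin n → ℝ)) (hv : ContDiffOn ℝ 1 vstar D)
    (Λ : (Fin M → ℝ) → (Fin M → ℝ)) (hΛ : ContDiffOn ℝ 1 Λ D)
    (hcon : ∀ x ∈ D, c (vstar x) = x)
    (hFOC : ∀ x ∈ D, fderiv ℝ F (vstar x)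
        = ∑ m, Λ x m • fderiv ℝ (fun v => c v m) (vstar x))
    (x : Fin M → ℝ) (hx : x ∈ D)
    (hnd : ∀ w : Fin n → ℝ, w ≠ 0 →
      ∑ s, ∑ k, w s *
        ((fderiv ℝ (fun v => fderiv ℝ F v (Pi.single k 1)) (vstar x) (Pi.single s 1))
          - ∑ m, Λ x m *
              fderiv ℝ (fun v => fderiv ℝ (fun u => c u m) v (Pi.single k 1)) (vstar x)
                (Pi.single s 1)) * w k < 0) :
    ∀ ρ : Fin M → ℝ, ρ ≠ 0 →
      ∑ i, ∑ j, ρ i * fderiv ℝ (fun y => Λ y i) x (Pi.single j 1) * ρ j < 0 := by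
  intro ρ hρ
  have hxD : D ∈ 𝓝 x := hD.mem_nhds hx
  have hvx : DifferentiableAt ℝ vstar x := (hv.differentiableOn one_ne_zero).differentiableAt hxD
  have hΛx : ∀ m, DifferentiableAt ℝ (fun y => Λ y m) x := differentiableAt_pi.1
    ((hΛ.differentiableOn one_ne_zero).differentiableAt hxD)
  have hcx : DifferentiableAt ℝ c (vstar x) := hc.differentiable two_ne_zero _
  have hD2 : ∀ f : (Fin n → ℝ) → ℝ, ContDiff ℝ 2 f → DifferentiableAt ℝ (fderiv ℝ f) (vstar x) :=
    fun f hf => (hf.fderiv_right (m := 1) le_rfl).differentiable one_ne_zero _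
  have hcm : ∀ m, DifferentiableAt ℝ (fderiv ℝ (fun v => c v m)) (vstar x) :=
    fun m => hD2 _ (contDiff_pi.1 hc m)
  set w := fderiv ℝ vstar x ρ
  have hcw : ∀ m, fderiv ℝ (fun v => c v m) (vstar x) w = ρ m := fun m => by
    rw [fderiv_apply hcx]
    exact congr_fun congr($(fderiv_comp_fderiv_eq_id hcx hvx (eventually_of_mem hxD hcon)) ρ) m
  have hw : w ≠ 0 := fun h => hρ (funext fun m => by simpa [h] using (hcw m).symm)
  have hresp := lagrangianHessian_fderiv_apply (hD2 F hF) hcm hvx hΛx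
    (eventually_of_mem hxD hFOC) ρ
  calc ∑ i, ∑ j, ρ i * fderiv ℝ (fun y => Λ y i) x (Pi.single j 1) * ρ j
      = ∑ m, ρ m * fderiv ℝ (fun y => Λ y m) x ρ := by
        refine Finset.sum_congr rfl fun m _ => ?_
        rw [apply_eq_sum_apply_single_mul, Finset.mul_sum]
        exact Finset.sum_congr rfl fun j _ => by ring
    _ = lagrangianHessian F (fun m v => c v m) (Λ x) (vstar x) w w := by
        rw [hresp]
        simp [hcw, mul_comm]
    _ < 0 := by
        rw [apply_apply_eq_sum_sum]
        simpa only [lagrangianHessian_apply_apply (hD2 F hF) hcm] using hnd w hw
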